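/- Let (w_i, W_i)_{i=1}^m be a Bessel sequence of subspaces of ℂ^n with frame operator S = Σ_i w_i² P_{W_i}, and suppose every spectral projection of S commutes with all P_{W_i}. Then for each eigenvalue μ of S, the subspaces M_{μ,i} = ker(S − μ I_n) ∩ W_i with weights w_i form a tight fusion frame for the eigenspace ker(S − μ I_n), with frame operator μ · P_{ker(S − μ I_n)}. -/

import Mathlib

/-!
If `S = ∑ wᵢ² P_{Wᵢ}` and `P_E` commutes with every `P_{Wᵢ}`, then `P_{E ⊓ Wᵢ} = P_{Wᵢ} P_E`,
so `∑ wᵢ² P_{E ⊓ Wᵢ} = S P_E`. For the eigenspace `E = ker (S - μ)` this is `μ P_E`.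
-/

noncomputable section

open scoped ComplexConjugate

/-- The orthogonal projection of `E` onto a subspace `K`, as an operator on `E`. -/
noncomputable def projCLM {E : Type*} [NormedAddCommGroup E]
    [InnerProductSpace ℂ E] (K : Submodule ℂ E) [K.HasOrthogonalProjection] :
    E →L[ℂ] E :=
  K.subtypeL.comp K.orthogonalProjectionOnto

section

variable {E : Type*} [NormedAddCommGroup E] [InnerProductSpace ℂ E]

theorem projCLM_eq_starProjection (K : Submodule ℂ E) [K.HasOrthogonalProjection] :
    projCLM K = K.starProjection :=
  rfl

theorem projCLM_inf_of_commute {K L : Submodule ℂ E} [K.HasOrthogonalProjection]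
    [L.HasOrthogonalProjection] [(K ⊓ L).HasOrthogonalProjection]
    (h : Commute (projCLM K) (projCLM L)) :
    projCLM (K ⊓ L) = projCLM K * projCLM L := by
  rw [projCLM_eq_starProjection, projCLM_eq_starProjection, projCLM_eq_starProjection] at *
  ext x
  rw [mul_apply_eq_comp]
  have hmem : K.starProjection (L.starProjection x) ∈ K ⊓ L := by
    refine ⟨K.starProjection_apply_mem _, ?_⟩
    rw [← mul_apply_eq_comp, h.eq, mul_apply_eq_comp]
    exact L.starProjection_apply_mem _
  refine Submodule.eq_starProjection_of_mem_of_inner_eq_zero hmem fun y hy => ?_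
  rw [inner_sub_left, K.inner_starProjection_left_eq_right,
    Submodule.starProjection_eq_self_iff.2 hy.1, L.inner_starProjection_left_eq_right,
    Submodule.starProjection_eq_self_iff.2 hy.2, sub_self]

theorem sum_smul_projCLM_inf_of_commute {ι : Type*} (s : Finset ι) (a : ι → ℂ)
    (K : Submodule ℂ E) (W : ι → Submodule ℂ E) [K.HasOrthogonalProjection]
    [∀ i, (W i).HasOrthogonalProjection] [∀ i, (K ⊓ W i).HasOrthogonalProjection]
    (h : ∀ i, Commute (projCLM K) (projCLM (W i))) :
    ∑ i ∈ s, a i • projCLM (K ⊓ W i) = (∑ i ∈ s, a i • projCLM (W i)) * projCLM K := by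
  rw [Finset.sum_mul]
  refine Finset.sum_congr rfl fun i _ => ?_
  rw [projCLM_inf_of_commute (h i), (h i).eq, smul_mul_assoc]

theorem mul_projCLM_ker_sub_smul_id (T : E →L[ℂ] E) (c : ℂ)
    [(LinearMap.ker (T - c • ContinuousLinearMap.id ℂ E).toLinearMap).HasOrthogonalProjection] :
    T * projCLM (LinearMap.ker (T - c • ContinuousLinearMap.id ℂ E).toLinearMap)
      = c • projCLM (LinearMap.ker (T - c • ContinuousLinearMap.id ℂ E).toLinearMap) := by
  rw [projCLM_eq_starProjection]
  ext x
  have hx := LinearMap.mem_ker.1 (Submodule.starProjection_apply_mem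
    (LinearMap.ker (T - c • ContinuousLinearMap.id ℂ E).toLinearMap) x)
  simpa [sub_eq_zero] using hx

end

theorem tight_on_eigenspaces_general
    (n m : ℕ)
    (w : Fin m → ℝ)
    (W : Fin m → Submodule ℂ (EuclideanSpace ℂ (Fin n)))
    (S : EuclideanSpace ℂ (Fin n) →L[ℂ] EuclideanSpace ℂ (Fin n))
    (hS : S = ∑ i, ((w i : ℂ) ^ 2) • projCLM (W i))
    (hcomm : ∀ (μ : ℝ) (i : Fin m),
      projCLM (LinearMap.ker (S - (μ : ℂ) • ContinuousLinearMap.id ℂ _).toLinearMap) *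
          projCLM (W i)
        = projCLM (W i) *
          projCLM (LinearMap.ker (S - (μ : ℂ) • ContinuousLinearMap.id ℂ _).toLinearMap))
    (μ : ℝ) :
    ∑ i, ((w i : ℂ) ^ 2) •
        projCLM (LinearMap.ker (S - (μ : ℂ) • ContinuousLinearMap.id ℂ _).toLinearMap ⊓ W i)
      = (μ : ℂ) •
        projCLM (LinearMap.ker (S - (μ : ℂ) • ContinuousLinearMap.id ℂ _).toLinearMap) := by
  rw [sum_smul_projCLM_inf_of_commute _ _ _ _ (hcomm μ), ← hS, mul_projCLM_ker_sub_smul_id]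

/-- If every spectral projection of the fusion frame operator
`S = ∑ w i ^ 2 • P (W i)` commutes with every `P (W i)`, then for each
eigenvalue `μ` of `S` the subspaces `ker (S - μ) ⊓ W i` with the weights `w i`
form a tight fusion frame for the eigenspace `ker (S - μ)`, with frame operator
`μ • P (ker (S - μ))`. -/
theorem tight_on_eigenspaces
    (n m : ℕ)
    (w : Fin m → ℝ) (hw : ∀ i, 0 < w i)
    (W : Fin m → Submodule ℂ (EuclideanSpace ℂ (Fin n)))
    (S : EuclideanSpace ℂ (Fin n) →L[ℂ] EuclideanSpace ℂ (Fin n))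
    (hS : S = ∑ i, ((w i : ℂ) ^ 2) • projCLM (W i))
    (hcomm : ∀ (μ : ℝ) (i : Fin m),
      projCLM (LinearMap.ker (S - (μ : ℂ) • ContinuousLinearMap.id ℂ _).toLinearMap) *
          projCLM (W i)
        = projCLM (W i) *
          projCLM (LinearMap.ker (S - (μ : ℂ) • ContinuousLinearMap.id ℂ _).toLinearMap))
    (μ : ℝ)
    (hμ : LinearMap.ker (S - (μ : ℂ) • ContinuousLinearMap.id ℂ _).toLinearMap ≠ ⊥) :
    ∑ i, ((w i : ℂ) ^ 2) •
        projCLM (LinearMap.ker (S - (μ : ℂ) • ContinuousLinearMap.id ℂ _).toLinearMap ⊓ W i)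
      = (μ : ℂ) •
        projCLM (LinearMap.ker (S - (μ : ℂ) • ContinuousLinearMap.id ℂ _).toLinearMap) :=
  tight_on_eigenspaces_general n m w W S hS hcomm μ

end
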